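/- If τ ≤ Σ_{k=1}^n φ^{*k} + φ^{*n} * τ pointwise for all n, τ ≤ 1, and Σ_{k=1}^∞ ∫_X φ^{*k}(x,y) dλ(y) ≤ g(x) with ∫_X φ^{*n}(x,z) dλ(z) → 0, then ∫_X τ(x,y) dλ(y) ≤ g(x), for λ-a.e. x, where the integral over X is obtained as a monotone limit of integrals over an increasing exhaustion B_1 ⊂ B_2 ⊂ ⋯ of finite-measure sets. -/

import Mathlib

/-!
On a set `B` of finite measure, integrate the iterated inequality in `y`: the partial sums
contribute at most `g x`, and since `τ ≤ 1` the remainder contributes at most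
`λ(B) · ∫ φ^{*n}(x,z) dλ(z)`, which tends to `0`. Hence `∫_B τ(x,·) ≤ g x` for every `B_ℓ`,
and the integral over `X` is the supremum of these.
-/

open MeasureTheory Filter
open scoped ENNReal NNReal Topology

/-- The convolution powers of a kernel: `convPow μ φ k = φ^{*(k+1)}`. -/
noncomputable def convPow {X : Type*} [MeasurableSpace X] (μ : Measure X)
    (φ : X → X → ℝ≥0∞) : ℕ → X → X → ℝ≥0∞
  | 0 => φ
  | (k + 1) => fun x y => ∫⁻ z, φ x z * convPow μ φ k z y ∂μ

theorem measurable_uncurry_convPow {X : Type*} [MeasurableSpace X] {μ : Measure X} [SFinite μ]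
    {φ : X → X → ℝ≥0∞} (hφ : Measurable (Function.uncurry φ)) (k : ℕ) :
    Measurable (Function.uncurry (convPow μ φ k)) := by
  induction k with
  | zero => exact hφ
  | succ k ih =>
    have hprod : Measurable fun p : (X × X) × X => φ p.1.1 p.2 * convPow μ φ k p.2 p.1.2 :=
      (hφ.comp (measurable_fst.fst.prodMk measurable_snd)).mul
        (ih.comp (measurable_snd.prodMk measurable_fst.snd))
    exact hprod.lintegral_prod_right'

theorem lintegral_eq_iSup_setLIntegral_of_monotone {α : Type*} [MeasurableSpace α]
    {μ : Measure α} {B : ℕ → Set α} (hB : Monotone B) (hBunion : ⋃ ℓ, B ℓ = Set.univ)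
    (f : α → ℝ≥0∞) : ∫⁻ y, f y ∂μ = ⨆ ℓ, ∫⁻ y in B ℓ, f y ∂μ := by
  rw [← setLIntegral_iUnion_of_directed f hB.directed_le, hBunion, Measure.restrict_univ]

theorem setLIntegral_le_lintegral_add_measure_mul {α : Type*} [MeasurableSpace α]
    {μ : Measure α} {f S : α → ℝ≥0∞} {c : ℝ≥0∞} (s : Set α) (hS : Measurable S)
    (h : ∀ y, f y ≤ S y + c) : ∫⁻ y in s, f y ∂μ ≤ ∫⁻ y, S y ∂μ + μ s * c := by
  calc ∫⁻ y in s, f y ∂μ ≤ ∫⁻ y in s, (S y + c) ∂μ := lintegral_mono h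
    _ = ∫⁻ y in s, S y ∂μ + μ s * c := by
      rw [lintegral_add_left hS, setLIntegral_const, mul_comm]
    _ ≤ ∫⁻ y, S y ∂μ + μ s * c := by gcongr; exact Measure.restrict_le_self

theorem ENNReal.le_of_forall_le_add_mul_of_tendsto_zero {ι : Type*} {l : Filter ι} [l.NeBot]
    {a b c : ℝ≥0∞} {t : ι → ℝ≥0∞} (hc : c ≠ ∞) (ht : Tendsto t l (𝓝 0))
    (h : ∀ n, a ≤ b + c * t n) : a ≤ b := by
  have hlim : Tendsto (fun n => b + c * t n) l (𝓝 b) := by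
    simpa using tendsto_const_nhds.add (ENNReal.Tendsto.const_mul ht (Or.inr hc))
  exact ge_of_tendsto' hlim h

theorem stmt5_general {X : Type*} [MeasurableSpace X] (lam : Measure X) [SigmaFinite lam]
    (B : ℕ → Set X) (hBmono : Monotone B)
    (hBunion : (⋃ ℓ, B ℓ) = Set.univ) (hBfin : ∀ ℓ, lam (B ℓ) < ∞)
    (τ φ : X → X → ℝ≥0∞)
    (hφm : Measurable (Function.uncurry φ))
    (hτ1 : ∀ x y, τ x y ≤ 1)
    (hiter : ∀ n : ℕ, ∀ x y,
      τ x y ≤ (∑ k ∈ Finset.range (n + 1), convPow lam φ k x y) +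
        ∫⁻ z, convPow lam φ n x z * τ z y ∂lam)
    (g : X → ℝ≥0)
    (hsum : ∀ᵐ x ∂lam, (∑' k : ℕ, ∫⁻ y, convPow lam φ k x y ∂lam) ≤ (g x : ℝ≥0∞))
    (htail : ∀ᵐ x ∂lam,
      Tendsto (fun n => ∫⁻ z, convPow lam φ n x z ∂lam) atTop (𝓝 0)) :
    ∀ᵐ x ∂lam, (∫⁻ y, τ x y ∂lam) ≤ (g x : ℝ≥0∞) := by
  filter_upwards [hsum, htail] with x hsum_x htail_x
  have hconv : ∀ k, Measurable (convPow lam φ k x) := fun k =>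
    (measurable_uncurry_convPow hφm k).comp measurable_prodMk_left
  have hpartial : ∀ n, ∫⁻ y, ∑ k ∈ Finset.range (n + 1), convPow lam φ k x y ∂lam ≤ g x := by
    intro n
    rw [lintegral_finsetSum _ fun k _ => hconv k]
    exact (ENNReal.sum_le_tsum _).trans hsum_x
  rw [lintegral_eq_iSup_setLIntegral_of_monotone hBmono hBunion]
  refine iSup_le fun ℓ =>
    ENNReal.le_of_forall_le_add_mul_of_tendsto_zero (hBfin ℓ).ne htail_x fun n => ?_
  calc ∫⁻ y in B ℓ, τ x y ∂lam
      ≤ ∫⁻ y, ∑ k ∈ Finset.range (n + 1), convPow lam φ k x y ∂lam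
          + lam (B ℓ) * ∫⁻ z, convPow lam φ n x z ∂lam :=
        setLIntegral_le_lintegral_add_measure_mul _ (Finset.measurable_sum _ fun k _ => hconv k)
          fun y => (hiter n x y).trans <| add_le_add_right
            (lintegral_mono fun z => mul_le_of_le_one_right' (hτ1 z y)) _
    _ ≤ g x + lam (B ℓ) * ∫⁻ z, convPow lam φ n x z ∂lam := by gcongr; exact hpartial n

/-- if `τ ≤ Σ_{k=1}^n φ^{*k} + φ^{*n} * τ` pointwise for all `n ≥ 1`, `τ ≤ 1`,
`Σ_{k=1}^∞ ∫ φ^{*k}(x,y) dλ(y) ≤ g(x)` and `∫ φ^{*n}(x,z) dλ(z) → 0` λ-a.e., then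
`∫_X τ(x,y) dλ(y) ≤ g(x)` λ-a.e., where `∫_X` arises as a monotone limit of the
integrals over an increasing exhaustion `B_ℓ ↑ X` of finite-measure sets. -/
theorem stmt5 {X : Type*} [MeasurableSpace X] (lam : Measure X) [SigmaFinite lam]
    (B : ℕ → Set X) (hBmeas : ∀ ℓ, MeasurableSet (B ℓ)) (hBmono : Monotone B)
    (hBunion : (⋃ ℓ, B ℓ) = Set.univ) (hBfin : ∀ ℓ, lam (B ℓ) < ∞)
    (τ φ : X → X → ℝ≥0∞)
    (hτm : Measurable (Function.uncurry τ)) (hφm : Measurable (Function.uncurry φ))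
    (hτ1 : ∀ x y, τ x y ≤ 1) (hφ1 : ∀ x y, φ x y ≤ 1)
    (hiter : ∀ n : ℕ, ∀ x y,
      τ x y ≤ (∑ k ∈ Finset.range (n + 1), convPow lam φ k x y) +
        ∫⁻ z, convPow lam φ n x z * τ z y ∂lam)
    (g : X → ℝ≥0)
    (hsum : ∀ᵐ x ∂lam, (∑' k : ℕ, ∫⁻ y, convPow lam φ k x y ∂lam) ≤ (g x : ℝ≥0∞))
    (htail : ∀ᵐ x ∂lam,
      Tendsto (fun n => ∫⁻ z, convPow lam φ n x z ∂lam) atTop (𝓝 0)) :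
    ∀ᵐ x ∂lam, (∫⁻ y, τ x y ∂lam) ≤ (g x : ℝ≥0∞) :=
  stmt5_general lam B hBmono hBunion hBfin τ φ hφm hτ1 hiter g hsum htail
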